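/- Let (X,d) be a metric space, T : X → P_cl(X) with SFix(T) = {x*}, and suppose there exist α, β, γ ≥ 0 with α + β + γ < 1 such that H(T(x), T(y)) ≤ α d(x,y) + β D(x, T(y)) + γ D(y, T(x)) for all x, y ∈ X. Then for every x ∈ X, H(T(x), {x*}) ≤ k d(x, x*), where k = (α+β)/(1−γ) ∈ [0,1). -/

import Mathlib

open Metric

theorem stmt1 {X : Type*} [MetricSpace X]
    (T : X → Set X)
    (hne : ∀ x, (T x).Nonempty) (hcl : ∀ x, IsClosed (T x))
    (xs : X) (hsfix : {x : X | T x = {x}} = {xs})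
    (α β γ : ℝ) (hα : 0 ≤ α) (hβ : 0 ≤ β) (hγ : 0 ≤ γ) (hsum : α + β + γ < 1)
    (hc : ∀ x y : X, hausdorffDist (T x) (T y) ≤
      α * dist x y + β * infDist x (T y) + γ * infDist y (T x)) :
    ∀ x : X, hausdorffDist (T x) {xs} ≤ (α + β) / (1 - γ) * dist x xs := by
  intro x
  have hγ1 : 0 < 1 - γ := by linarith
  have hk : 0 ≤ (α + β) / (1 - γ) := div_nonneg (by linarith) hγ1.le
  have hxs : T xs = {xs} := by
    have : xs ∈ ({xs} : Set X) := rfl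
    rw [← hsfix] at this
    exact this
  by_cases htop : Metric.hausdorffEDist (T x) ({xs} : Set X) = ⊤
  · have h0 : hausdorffDist (T x) ({xs} : Set X) = 0 := by
      rw [Metric.hausdorffDist, htop]; simp
    rw [h0]
    positivity
  · have h1 := hc x xs
    rw [hxs, Metric.infDist_singleton] at h1
    have h3 : infDist xs (T x) ≤ hausdorffDist ({xs} : Set X) (T x) :=
      infDist_le_hausdorffDist_of_mem rfl
        (by rwa [Metric.hausdorffEDist_comm] at htop)
    rw [Metric.hausdorffDist_comm] at h3
    rw [div_mul_eq_mul_div, le_div_iff₀ hγ1]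
    nlinarith [h1, h3]
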